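/- arXiv:1802.04084 — 5 statements merged into one kernel-verified Lean document; each statement's English description precedes it below -/
import Mathlib

section
/- The second derivative of the logistic loss φ(t) = log(1 + exp(t)) is Lipschitz continuous with constant 1/(6√3), i.e., |φ''(t) - φ''(s)| ≤ (1/(6√3))|t - s| for all real t, s. -/
/-!
The derivative of `log (1 + exp t)` is the sigmoid `σ`, so `φ'' = σ (1 - σ)` and
`φ''' = σ (1 - σ) (1 - 2σ)`. Writing `u = 1 - 2σ ∈ (-1, 1)` this is `u (1 - u²) / 4`, whose
maximum modulus `1 / (6√3)` is attained at `u² = 1/3`; the mean value theorem concludes.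
-/

open Real

namespace Real

lemma hasDerivAt_log_one_add_exp (x : ℝ) :
    HasDerivAt (fun t => log (1 + exp t)) (sigmoid x) x := by
  convert ((hasDerivAt_exp x).const_add 1).log (by positivity) using 1
  rw [sigmoid_def, exp_neg]
  field_simp
  ring

lemma iteratedDeriv_two_log_one_add_exp :
    iteratedDeriv 2 (fun t => log (1 + exp t)) = fun x => sigmoid x * (1 - sigmoid x) := by
  rw [iteratedDeriv_succ, iteratedDeriv_one,
    funext fun x => (hasDerivAt_log_one_add_exp x).deriv, deriv_sigmoid]

lemma hasDerivAt_sigmoid_mul_one_sub_sigmoid (x : ℝ) :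
    HasDerivAt (fun t => sigmoid t * (1 - sigmoid t))
      (sigmoid x * (1 - sigmoid x) * (1 - 2 * sigmoid x)) x :=
  ((hasDerivAt_sigmoid x).mul ((hasDerivAt_sigmoid x).const_sub 1)).congr_deriv (by ring)

lemma abs_mul_one_sub_mul_one_sub_two_mul_le {p : ℝ} (hp₀ : 0 ≤ p) (hp₁ : p ≤ 1) :
    |p * (1 - p) * (1 - 2 * p)| ≤ 1 / (6 * √3) := by
  have hsqrt : 1 / (6 * √3) = √(1 / 108) := by
    rw [sqrt_div' _ (by norm_num : (0:ℝ) ≤ 108), sqrt_one, show (108 : ℝ) = 6 ^ 2 * 3 by norm_num,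
      sqrt_mul' _ (by norm_num), sqrt_sq (by norm_num)]
  rw [hsqrt]
  apply abs_le_sqrt
  -- with `v = (1 - 2p)²`: `1/108 - (p(1-p)(1-2p))² = (3v - 1)² (4 - 3v) / 432`
  set v := (1 - 2 * p) ^ 2
  have hv : v ≤ 1 := by nlinarith
  nlinarith [mul_nonneg (sq_nonneg (3 * v - 1)) (by linarith : (0:ℝ) ≤ 4 - 3 * v)]

end Real

theorem logistic_second_deriv_lipschitz (t s : ℝ) :
    |iteratedDeriv 2 (fun t : ℝ => Real.log (1 + Real.exp t)) t -
      iteratedDeriv 2 (fun t : ℝ => Real.log (1 + Real.exp t)) s| ≤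
      (1 / (6 * Real.sqrt 3)) * |t - s| := by
  rw [iteratedDeriv_two_log_one_add_exp]
  simpa only [Real.norm_eq_abs] using
    convex_univ.norm_image_sub_le_of_norm_hasDerivWithin_le
      (fun x _ => (hasDerivAt_sigmoid_mul_one_sub_sigmoid x).hasDerivWithinAt)
      (fun x _ => abs_mul_one_sub_mul_one_sub_two_mul_le (sigmoid_nonneg x) (sigmoid_le_one x))
      (Set.mem_univ s) (Set.mem_univ t)
end

section
/- Let ξ₀ > 0 and let (ξₖ) be a nonnegative nonincreasing deterministic sequence satisfying ξ_{k+1} ≤ ξₖ - ξₖ^{3/2}/c for a constant c > 0. Then 1/√ξₖ ≥ 1/√ξ₀ + k/(2c) for all k with ξₖ > 0, and hence for k ≥ 2c/√ε - 2c/√ξ₀ one has ξₖ ≤ ε for any 0 < ε < min{ξ₀, c²}. -/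
lemma step_sqrt (a b c : ℝ) (hc : 0 < c) (hb : 0 < b)
    (h : b ≤ a - a ^ ((3:ℝ)/2) / c) (hab : b ≤ a) :
    1 / Real.sqrt a + 1 / (2 * c) ≤ 1 / Real.sqrt b := by
  have ha : 0 < a := lt_of_lt_of_le hb hab
  have hrw : a ^ ((3:ℝ)/2) = a * Real.sqrt a := by
    rw [show (3:ℝ)/2 = 1 + 1/2 by norm_num, Real.rpow_add ha, Real.rpow_one,
      ← Real.sqrt_eq_rpow]
  rw [hrw] at h
  set sa := Real.sqrt a with hsa
  set sb := Real.sqrt b with hsb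
  have hsa_pos : 0 < sa := Real.sqrt_pos.mpr ha
  have hsb_pos : 0 < sb := Real.sqrt_pos.mpr hb
  have hsq_a : sa ^ 2 = a := Real.sq_sqrt ha.le
  have hsq_b : sb ^ 2 = b := Real.sq_sqrt hb.le
  have hle : sb ≤ sa := Real.sqrt_le_sqrt hab
  have key : c * (sa ^ 2 - sb ^ 2) ≥ sa ^ 2 * sa := by
    have := h
    rw [← hsq_a, ← hsq_b] at this
    have h2 : sa ^ 2 * sa / c ≤ sa ^ 2 - sb ^ 2 := by linarith
    calc sa ^ 2 * sa = c * (sa ^ 2 * sa / c) := by field_simp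
    _ ≤ c * (sa ^ 2 - sb ^ 2) := by
        exact mul_le_mul_of_nonneg_left h2 hc.le
  rw [div_add_div _ _ (ne_of_gt hsa_pos) (by positivity), div_le_div_iff₀ (by positivity) hsb_pos]
  nlinarith [mul_pos hsa_pos hsb_pos, sq_nonneg (sa - sb), mul_nonneg (sub_nonneg.mpr hle) hsb_pos.le]

theorem recurrence_sqrt_rate (ξ : ℕ → ℝ) (c : ℝ) (hc : 0 < c)
    (h0 : 0 < ξ 0) (hnonneg : ∀ k, 0 ≤ ξ k) (hmono : Antitone ξ)
    (hrec : ∀ k, 0 < ξ k → ξ (k + 1) ≤ ξ k - (ξ k) ^ ((3:ℝ)/2) / c) :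
    (∀ k : ℕ, 0 < ξ k → 1 / Real.sqrt (ξ 0) + (k : ℝ) / (2 * c) ≤ 1 / Real.sqrt (ξ k)) ∧
    (∀ ε : ℝ, 0 < ε → ε < min (ξ 0) (c ^ 2) →
      ∀ k : ℕ, 2 * c / Real.sqrt ε - 2 * c / Real.sqrt (ξ 0) ≤ (k : ℝ) → ξ k ≤ ε) := by
  have main : ∀ k : ℕ, 0 < ξ k →
      1 / Real.sqrt (ξ 0) + (k : ℝ) / (2 * c) ≤ 1 / Real.sqrt (ξ k) := by
    intro k
    induction k with
    | zero => intro _; simp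
    | succ n ih =>
      intro hpos
      have hn : 0 < ξ n := lt_of_lt_of_le hpos (hmono (Nat.le_succ n))
      have hstep := step_sqrt (ξ n) (ξ (n + 1)) c hc hpos (hrec n hn) (hmono (Nat.le_succ n))
      have := ih hn
      push_cast
      have : 1 / Real.sqrt (ξ 0) + ((n : ℝ) + 1) / (2 * c) =
          (1 / Real.sqrt (ξ 0) + (n : ℝ) / (2 * c)) + 1 / (2 * c) := by ring
      rw [this]
      linarith [ih hn]
  refine ⟨main, ?_⟩
  intro ε hε hεmin k hk
  by_contra hcon
  push_neg at hcon
  have hpos : 0 < ξ k := lt_trans hε hcon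
  have h1 := main k hpos
  have hsε : 0 < Real.sqrt ε := Real.sqrt_pos.mpr hε
  have hsk : 0 < Real.sqrt (ξ k) := Real.sqrt_pos.mpr hpos
  have hsεk : Real.sqrt ε < Real.sqrt (ξ k) := Real.sqrt_lt_sqrt hε.le hcon
  -- from hk : 2c/√ε - 2c/√ξ0 ≤ k, divide by 2c
  have hs0 : 0 < Real.sqrt (ξ 0) := Real.sqrt_pos.mpr h0
  have hk' : 1 / Real.sqrt ε - 1 / Real.sqrt (ξ 0) ≤ (k : ℝ) / (2 * c) := by
    have h := mul_le_mul_of_nonneg_left hk (by positivity : (0:ℝ) ≤ 1 / (2 * c))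
    have e1 : (1 / (2 * c)) * (2 * c / Real.sqrt ε - 2 * c / Real.sqrt (ξ 0)) =
        1 / Real.sqrt ε - 1 / Real.sqrt (ξ 0) := by
      field_simp
    have e2 : (1 / (2 * c)) * (k : ℝ) = (k : ℝ) / (2 * c) := by ring
    rw [e1, e2] at h
    exact h
  have h2 : 1 / Real.sqrt ε ≤ 1 / Real.sqrt (ξ k) := by linarith
  have h3 : 1 / Real.sqrt (ξ k) < 1 / Real.sqrt ε := by
    exact one_div_lt_one_div_of_lt hsε hsεk
  linarith
end

section
/- For a τ-nice sampling Ŝ (uniform over all subsets of {1,…,n} of size τ) and any symmetric matrix A ∈ ℝ^{N×N} with a block structure of n blocks, E[A_{[Ŝ]}] = (τ/n)(1 - (τ-1)/(n-1))·blockdiag(A) + (τ(τ-1)/(n(n-1)))·A, where A_{[S]} zeroes all entries outside rows and columns belonging to blocks in S. -/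
open Finset

lemma count_supersets {α : Type*} [DecidableEq α] (k : ℕ) (s t : Finset α)
    (hts : t ⊆ s) (htk : t.card ≤ k) :
    ((powersetCard k s).filter (fun S => t ⊆ S)).card
      = (s.card - t.card).choose (k - t.card) := by
  rw [← Finset.card_sdiff_of_subset hts, ← Finset.card_powersetCard]
  apply Finset.card_bij' (fun S _ => S \ t) (fun T _ => T ∪ t)
  · intro S hS
    simp only [mem_filter, mem_powersetCard] at hS
    simp only [mem_powersetCard]
    exact ⟨sdiff_subset_sdiff hS.1.1 (Finset.Subset.refl t),
      by rw [Finset.card_sdiff_of_subset hS.2, hS.1.2]⟩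
  · intro T hT
    simp only [mem_powersetCard] at hT
    simp only [mem_filter, mem_powersetCard]
    have hTt : Disjoint T t := Finset.disjoint_of_subset_left hT.1 Finset.sdiff_disjoint
    refine ⟨⟨Finset.union_subset (hT.1.trans (Finset.sdiff_subset)) hts, ?_⟩,
      Finset.subset_union_right⟩
    rw [Finset.card_union_of_disjoint hTt, hT.2]
    omega
  · intro S hS
    simp only [mem_filter] at hS
    exact Finset.sdiff_union_of_subset hS.2
  · intro T hT
    simp only [mem_powersetCard] at hT
    have hTt : Disjoint T t := Finset.disjoint_of_subset_left hT.1 Finset.sdiff_disjoint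
    exact Finset.union_sdiff_cancel_right hTt

lemma choose_id1 {n τ : ℕ} (hτ1 : 1 ≤ τ) (hn : 1 ≤ n) :
    n * (n - 1).choose (τ - 1) = τ * n.choose τ := by
  obtain ⟨m, rfl⟩ : ∃ m, n = m + 1 := ⟨n - 1, by omega⟩
  obtain ⟨t, rfl⟩ : ∃ t, τ = t + 1 := ⟨τ - 1, by omega⟩
  show (m + 1) * m.choose t = (t + 1) * (m + 1).choose (t + 1)
  rw [Nat.add_one_mul_choose_eq]
  exact Nat.mul_comm _ _

lemma choose_id2 {n τ : ℕ} (hτ2 : 2 ≤ τ) (hn : 2 ≤ n) :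
    n * (n - 1) * (n - 2).choose (τ - 2) = τ * (τ - 1) * n.choose τ := by
  obtain ⟨m, rfl⟩ : ∃ m, n = m + 2 := ⟨n - 2, by omega⟩
  obtain ⟨t, rfl⟩ : ∃ t, τ = t + 2 := ⟨τ - 2, by omega⟩
  have h1 : (m + 1) * m.choose t = (m + 1).choose (t + 1) * (t + 1) :=
    Nat.add_one_mul_choose_eq m t
  have h2 : (m + 2) * (m + 1).choose (t + 1) = (m + 2).choose (t + 2) * (t + 2) :=
    Nat.add_one_mul_choose_eq (m + 1) (t + 1)
  show (m + 2) * (m + 1) * m.choose t = (t + 2) * (t + 1) * (m + 2).choose (t + 2)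
  calc (m + 2) * (m + 1) * m.choose t
      = (m + 2) * ((m + 1) * m.choose t) := by ring
    _ = (m + 2) * ((m + 1).choose (t + 1) * (t + 1)) := by rw [h1]
    _ = ((m + 2) * (m + 1).choose (t + 1)) * (t + 1) := by ring
    _ = ((m + 2).choose (t + 2) * (t + 2)) * (t + 1) := by rw [h2]
    _ = (t + 2) * (t + 1) * (m + 2).choose (t + 2) := by ring

theorem tau_nice_expectation {N n τ : ℕ} (hn : 2 ≤ n) (hτ1 : 1 ≤ τ) (hτn : τ ≤ n)
    (A : Matrix (Fin N) (Fin N) ℝ) (blk : Fin N → Fin n) :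
    (1 / (n.choose τ : ℝ)) •
        ∑ S ∈ Finset.powersetCard τ (Finset.univ : Finset (Fin n)),
          (Matrix.of fun i j => if blk i ∈ S ∧ blk j ∈ S then A i j else 0) =
      ((τ : ℝ) / n * (1 - ((τ : ℝ) - 1) / ((n : ℝ) - 1))) •
          (Matrix.of fun i j => if blk i = blk j then A i j else 0) +
        ((τ : ℝ) * ((τ : ℝ) - 1) / ((n : ℝ) * ((n : ℝ) - 1))) • A := by
  have hC : (0 : ℝ) < (n.choose τ : ℝ) := by exact_mod_cast Nat.choose_pos hτn
  have hC0 : (n.choose τ : ℝ) ≠ 0 := ne_of_gt hC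
  have hn0 : (n : ℝ) ≠ 0 := by positivity
  have hn1 : (n : ℝ) - 1 ≠ 0 := by
    have : (2 : ℝ) ≤ n := by exact_mod_cast hn
    linarith
  ext i j
  simp only [Matrix.add_apply, Matrix.smul_apply, Matrix.sum_apply, Matrix.of_apply,
    smul_eq_mul]
  have key : ∀ P : Finset (Fin n) → Prop, ∀ _ : DecidablePred P,
      ∑ S ∈ Finset.powersetCard τ (Finset.univ : Finset (Fin n)),
        (if P S then A i j else 0)
      = ((Finset.powersetCard τ (Finset.univ : Finset (Fin n))).filter P).card * A i j := by
    intro P _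
    rw [← Finset.sum_filter, Finset.sum_const, nsmul_eq_mul]
  have hiff : ∀ S : Finset (Fin n), (blk i ∈ S ∧ blk j ∈ S) ↔
      ({blk i, blk j} : Finset (Fin n)) ⊆ S := by
    intro S
    simp [Finset.insert_subset_iff]
  rw [show (fun S => if blk i ∈ S ∧ blk j ∈ S then A i j else 0)
      = (fun S => if ({blk i, blk j} : Finset (Fin n)) ⊆ S then A i j else 0) by
    funext S; simp only [hiff]]
  rw [key _ inferInstance]
  by_cases hbl : blk i = blk j
  · rw [if_pos hbl, hbl]
    have hpair : ({blk j, blk j} : Finset (Fin n)) = {blk j} := by simp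
    rw [hpair, count_supersets τ _ _ (Finset.subset_univ _) (by simpa using hτ1)]
    simp only [Finset.card_univ, Fintype.card_fin, Finset.card_singleton]
    have hid : ((n : ℝ) * ((n - 1).choose (τ - 1) : ℕ)) = (τ : ℝ) * (n.choose τ : ℕ) := by
      exact_mod_cast congrArg (Nat.cast : ℕ → ℝ) (choose_id1 hτ1 (by omega))
    field_simp
    linear_combination ((n : ℝ) - 1) * A i j * hid
  · rw [if_neg hbl]
    have hblj : blk i ≠ blk j := hbl
    have hpaircard : ({blk i, blk j} : Finset (Fin n)).card = 2 := by
      rw [Finset.card_insert_of_notMem (by simpa using hblj), Finset.card_singleton]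
    by_cases hτ : 2 ≤ τ
    · rw [count_supersets τ _ _ (Finset.subset_univ _) (by omega)]
      simp only [Finset.card_univ, Fintype.card_fin, hpaircard]
      have hid : ((n : ℝ) * ((n : ℝ) - 1) * ((n - 2).choose (τ - 2) : ℕ))
          = (τ : ℝ) * ((τ : ℝ) - 1) * (n.choose τ : ℕ) := by
        have := congrArg (Nat.cast : ℕ → ℝ) (choose_id2 hτ hn)
        push_cast [Nat.cast_sub (by omega : 1 ≤ n), Nat.cast_sub (by omega : 1 ≤ τ)] at this
        linarith
      field_simp
      linear_combination A i j * hid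
    · have hτeq : τ = 1 := by omega
      subst hτeq
      have hempty : ((Finset.powersetCard 1 (Finset.univ : Finset (Fin n))).filter
          (fun S => ({blk i, blk j} : Finset (Fin n)) ⊆ S)) = ∅ := by
        rw [Finset.filter_eq_empty_iff]
        intro S hS hsub
        rw [Finset.mem_powersetCard] at hS
        have := Finset.card_le_card hsub
        omega
      rw [hempty]
      simp
end

section
/- The function φ(t) = (1/3)‖t - t₀‖³ on ℝ^d is twice differentiable with Hessian Lipschitz continuous with constant 2: ‖∇²φ(x) - ∇²φ(y)‖ ≤ 2‖x - y‖ for all x, y. -/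
/-!
Write `H(u) = ‖u‖ ⟪·, ·⟫ + ‖u‖⁻¹ ⟪u, ·⟫ ⟪u, ·⟫` for the Hessian of `u ↦ ‖u‖³ / 3` (both its
gradient `‖u‖ ⟪u, ·⟫` and `H` vanish at `0`, where the function is `O(‖u‖³)`). Since
`H(p) - H(q)` is symmetric, its operator norm is controlled by its quadratic form, so it
suffices that `q ↦ H(q)(v, v)` is `2‖v‖²`-Lipschitz. This function is the pointwise maximum over
`β ∈ [-1, 1]` of `(1 - β²) ‖q‖ ‖v‖² + 2β ⟪q, v⟫ ‖v‖` (AM-GM on `⟪q, v⟫² / ‖q‖`, with equality at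
`β = cos ∠(q, v)`), and each of these is `2‖v‖²`-Lipschitz because `1 - β² + 2|β| ≤ 2`.
-/

open RealInnerProductSpace Asymptotics InnerProductGeometry

noncomputable section

variable {E : Type*} [NormedAddCommGroup E] [InnerProductSpace ℝ E]

-- `innerSL ℝ` is typed as conjugate-linear in its first argument; over `ℝ` it is bilinear.
def innerBilin : E →L[ℝ] E →L[ℝ] ℝ := innerSL ℝ

@[simp] lemma innerBilin_apply (v w : E) : innerBilin v w = ⟪v, w⟫ := rfl

def normCube (u : E) : ℝ := (1 / 3) * ‖u‖ ^ 3

def normCubeGrad (u : E) : E →L[ℝ] ℝ := ‖u‖ • innerSL ℝ u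

-- At `u = 0` the second summand vanishes through `0⁻¹ = 0`, giving the correct Hessian `0`.
def normCubeHess (u : E) : E →L[ℝ] E →L[ℝ] ℝ :=
  ‖u‖ • innerBilin + (‖u‖⁻¹ • innerSL ℝ u).smulRight (innerSL ℝ u)

lemma normCubeHess_apply (u v w : E) :
    normCubeHess u v w = ‖u‖ * ⟪v, w⟫ + ‖u‖⁻¹ * ⟪u, v⟫ * ⟪u, w⟫ := by
  simp [normCubeHess]

lemma normCubeHess_apply_comm (u v w : E) : normCubeHess u v w = normCubeHess u w v := by
  simp only [normCubeHess_apply, real_inner_comm v w]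
  ring

lemma normCubeHess_apply_self (u v : E) :
    normCubeHess u v v = ‖u‖ * ‖v‖ ^ 2 + ⟪u, v⟫ ^ 2 / ‖u‖ := by
  rw [normCubeHess_apply, real_inner_self_eq_norm_sq]
  ring

lemma hasFDerivAt_norm_of_ne_zero {u : E} (hu : u ≠ 0) :
    HasFDerivAt (‖·‖) (‖u‖⁻¹ • innerSL ℝ u) u := by
  have h := (hasStrictFDerivAt_norm_sq u).hasFDerivAt.sqrt (by positivity)
  simp only [Real.sqrt_sq (norm_nonneg _)] at h
  convert h using 1
  ext v
  simp only [smul_apply, coe_innerSL_apply, smul_eq_mul, one_div, mul_inv_rev, nsmul_eq_mul,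
    Nat.cast_ofNat]
  field_simp

lemma hasFDerivAt_normCube (u : E) : HasFDerivAt normCube (normCubeGrad u) u := by
  have h := ((hasFDerivAt_norm_rpow u (p := 3) (by norm_num)).const_mul (1 / 3 : ℝ))
  have hφ : (fun y : E => 1 / 3 * ‖y‖ ^ (3 : ℝ)) = normCube := by
    funext y
    norm_num [normCube]
  rw [hφ] at h
  refine h.congr_fderiv ?_
  ext v
  norm_num [normCubeGrad]
  ring

lemma hasFDerivAt_normCubeGrad (u : E) : HasFDerivAt normCubeGrad (normCubeHess u) u := by
  rcases eq_or_ne u 0 with rfl | hu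
  · rw [hasFDerivAt_iff_isLittleO_nhds_zero]
    refine (isBigO_of_le _ fun h => ?_).trans_isLittleO (isLittleO_norm_pow_id one_lt_two)
    simp [normCubeGrad, normCubeHess, norm_smul, sq]
  · exact (hasFDerivAt_norm_of_ne_zero hu).smul innerBilin.hasFDerivAt


lemma opNorm_le_of_abs_apply_self_le {B : E →L[ℝ] E →L[ℝ] ℝ} (hB : ∀ v w, B v w = B w v)
    {C : ℝ} (hC : 0 ≤ C) (hdiag : ∀ v, |B v v| ≤ C * ‖v‖ ^ 2) : ‖B‖ ≤ C := by
  refine ContinuousLinearMap.opNorm_le_of_unit_norm hC fun v hv => ?_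
  refine ContinuousLinearMap.opNorm_le_of_unit_norm hC fun w hw => ?_
  have polarization : 4 * B v w = B (v + w) (v + w) - B (v - w) (v - w) := by
    simp only [map_add, map_sub, add_apply, sub_apply, hB w v]
    ring
  have parallelogram : ‖v + w‖ ^ 2 + ‖v - w‖ ^ 2 = 4 := by
    have := parallelogram_law_with_norm ℝ v w
    rw [hv, hw] at this
    nlinarith
  have : 4 * |B v w| ≤ |B (v + w) (v + w)| + |B (v - w) (v - w)| := by
    rw [← abs_of_pos (four_pos : (0 : ℝ) < 4), ← abs_mul, polarization]
    exact abs_sub _ _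
  rw [Real.norm_eq_abs]
  nlinarith [hdiag (v + w), hdiag (v - w)]

def normCubeHessMinorant (v : E) (β : ℝ) (q : E) : ℝ :=
  (1 - β ^ 2) * ‖q‖ * ‖v‖ ^ 2 + 2 * β * ⟪q, v⟫ * ‖v‖

lemma normCubeHessMinorant_le (v : E) (β : ℝ) (q : E) :
    normCubeHessMinorant v β q ≤ normCubeHess q v v := by
  rcases eq_or_ne q 0 with rfl | hq
  · simp [normCubeHessMinorant, normCubeHess_apply_self]
  have hq' : 0 < ‖q‖ := norm_pos_iff.mpr hq
  have gap : normCubeHess q v v - normCubeHessMinorant v β q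
      = (⟪q, v⟫ - β * ‖q‖ * ‖v‖) ^ 2 / ‖q‖ := by
    rw [normCubeHess_apply_self, normCubeHessMinorant]
    field_simp
    ring
  rw [← sub_nonneg, gap]
  positivity

lemma normCubeHess_apply_self_eq_minorant {p v : E} {β : ℝ} (hβ : ⟪p, v⟫ = β * ‖p‖ * ‖v‖) :
    normCubeHess p v v = normCubeHessMinorant v β p := by
  rw [normCubeHess_apply_self, normCubeHessMinorant, hβ]
  rcases eq_or_ne p 0 with rfl | hp
  · simp
  have hp' : 0 < ‖p‖ := norm_pos_iff.mpr hp
  field_simp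
  ring

lemma normCubeHessMinorant_sub_le (v : E) {β : ℝ} (hβ : |β| ≤ 1) (p q : E) :
    normCubeHessMinorant v β p - normCubeHessMinorant v β q ≤ 2 * ‖p - q‖ * ‖v‖ ^ 2 := by
  have hβ2 : 0 ≤ 1 - β ^ 2 := by nlinarith [abs_nonneg β, sq_abs β]
  have radial : (1 - β ^ 2) * (‖p‖ - ‖q‖) * ‖v‖ ^ 2 ≤ (1 - β ^ 2) * ‖p - q‖ * ‖v‖ ^ 2 := by
    gcongr
    exact norm_sub_norm_le p q
  have tangential : β * ⟪p - q, v⟫ ≤ |β| * (‖p - q‖ * ‖v‖) :=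
    calc β * ⟪p - q, v⟫ ≤ |β * ⟪p - q, v⟫| := le_abs_self _
      _ = |β| * |⟪p - q, v⟫| := abs_mul _ _
      _ ≤ |β| * (‖p - q‖ * ‖v‖) := by gcongr; exact abs_real_inner_le_norm _ _
  have weights : (1 - β ^ 2) + 2 * |β| ≤ 2 := by nlinarith [sq_abs β, sq_nonneg (1 - |β|)]
  calc normCubeHessMinorant v β p - normCubeHessMinorant v β q
      = (1 - β ^ 2) * (‖p‖ - ‖q‖) * ‖v‖ ^ 2 + 2 * (β * ⟪p - q, v⟫) * ‖v‖ := by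
        rw [normCubeHessMinorant, normCubeHessMinorant, inner_sub_left]
        ring
    _ ≤ (1 - β ^ 2) * ‖p - q‖ * ‖v‖ ^ 2 + 2 * (|β| * (‖p - q‖ * ‖v‖)) * ‖v‖ := by
        gcongr
    _ = ((1 - β ^ 2) + 2 * |β|) * (‖p - q‖ * ‖v‖ ^ 2) := by ring
    _ ≤ 2 * (‖p - q‖ * ‖v‖ ^ 2) := by gcongr
    _ = 2 * ‖p - q‖ * ‖v‖ ^ 2 := by ring

lemma normCubeHess_apply_self_sub_le (p q v : E) :
    normCubeHess p v v - normCubeHess q v v ≤ 2 * ‖p - q‖ * ‖v‖ ^ 2 := by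
  set β := Real.cos (angle p v)
  have hβ : ⟪p, v⟫ = β * ‖p‖ * ‖v‖ := by rw [mul_assoc, cos_angle_mul_norm_mul_norm]
  calc normCubeHess p v v - normCubeHess q v v
      ≤ normCubeHessMinorant v β p - normCubeHessMinorant v β q := by
        rw [normCubeHess_apply_self_eq_minorant hβ]
        linarith [normCubeHessMinorant_le v β q]
    _ ≤ 2 * ‖p - q‖ * ‖v‖ ^ 2 := normCubeHessMinorant_sub_le v (Real.abs_cos_le_one _) p q

lemma norm_normCubeHess_sub_le (p q : E) : ‖normCubeHess p - normCubeHess q‖ ≤ 2 * ‖p - q‖ := by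
  refine opNorm_le_of_abs_apply_self_le (fun v w => ?_) (by positivity) fun v => ?_
  · simp only [sub_apply, normCubeHess_apply_comm _ v w]
  · have h₁ := normCubeHess_apply_self_sub_le p q v
    have h₂ := normCubeHess_apply_self_sub_le q p v
    rw [norm_sub_rev] at h₂
    simp only [sub_apply]
    exact abs_sub_le_iff.mpr ⟨h₁, by linarith⟩

lemma lipschitzWith_normCubeHess : LipschitzWith 2 (normCubeHess : E → _) :=
  .of_dist_le_mul fun p q => by
    simpa [dist_eq_norm] using norm_normCubeHess_sub_le p q

lemma fderiv_normCube : fderiv ℝ (normCube : E → ℝ) = normCubeGrad :=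
  funext fun u => (hasFDerivAt_normCube u).fderiv

lemma fderiv_normCubeGrad : fderiv ℝ (normCubeGrad : E → _) = normCubeHess :=
  funext fun u => (hasFDerivAt_normCubeGrad u).fderiv

lemma contDiff_normCube : ContDiff ℝ 2 (normCube : E → ℝ) := by
  refine contDiff_succ_iff_hasFDerivAt.mpr ⟨normCubeGrad, ?_, hasFDerivAt_normCube⟩
  exact contDiff_one_iff_hasFDerivAt.mpr
    ⟨normCubeHess, lipschitzWith_normCubeHess.continuous, hasFDerivAt_normCubeGrad⟩

end

theorem cubed_norm_hessian_lipschitz {d : ℕ} (t₀ : EuclideanSpace ℝ (Fin d)) :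
    ContDiff ℝ 2 (fun t : EuclideanSpace ℝ (Fin d) => (1/3) * ‖t - t₀‖ ^ 3) ∧
    ∀ x y : EuclideanSpace ℝ (Fin d),
      ‖fderiv ℝ (fderiv ℝ (fun t : EuclideanSpace ℝ (Fin d) => (1/3) * ‖t - t₀‖ ^ 3)) x -
        fderiv ℝ (fderiv ℝ (fun t : EuclideanSpace ℝ (Fin d) => (1/3) * ‖t - t₀‖ ^ 3)) y‖ ≤
        2 * ‖x - y‖ := by
  have hφ : (fun t : EuclideanSpace ℝ (Fin d) => (1/3) * ‖t - t₀‖ ^ 3) =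
      fun t => normCube (t - t₀) := rfl
  have gradient : fderiv ℝ (fun t => normCube (t - t₀)) = fun t => normCubeGrad (t - t₀) :=
    funext fun t => by rw [fderiv_comp_sub t₀, fderiv_normCube]
  have hessian (x) : fderiv ℝ (fun t => normCubeGrad (t - t₀)) x = normCubeHess (x - t₀) := by
    rw [fderiv_comp_sub t₀, fderiv_normCubeGrad]
  rw [hφ, gradient]
  refine ⟨contDiff_normCube.comp (contDiff_id.sub contDiff_const), fun x y => ?_⟩
  rw [hessian, hessian, ← sub_sub_sub_cancel_right x y t₀]
  exact norm_normCubeHess_sub_le _ _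
end

section
/- Let B̂ ∈ ℝ^{m×s}, Â ∈ ℝ^{s×s} symmetric positive semidefinite, D ∈ ℝ^{m×m} diagonal positive semidefinite, λ, m̄, H > 0, and b ∈ ℝ^s. Define Z(t) = m̄λÂ + B̂ᵀ(D + (Ht/2)I)B̂ and suppose Z(t*) is invertible for some t* ≥ 0 with t* = ‖B̂ Z(t*)^{-1} b‖. Then x* = -Z(t*)^{-1}b, h* = B̂x*, μ* = b₂ + Dh* + (H/2)‖h*‖h* satisfy the KKT system: m̄λb₁ + m̄λÂx* + B̂ᵀμ* = 0, b₂ + Dh* + (H/2)‖h*‖h* - μ* = 0, h* = B̂x*, where b = m̄λb₁ + B̂ᵀb₂. -/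
/-- Euclidean norm of a vector in `Fin m → ℝ`. -/
noncomputable def euclNorm {m : ℕ} (v : Fin m → ℝ) : ℝ := Real.sqrt (∑ i, v i ^ 2)

lemma euclNorm_neg {m : ℕ} (v : Fin m → ℝ) : euclNorm (-v) = euclNorm v := by
  unfold euclNorm
  congr 1
  exact Finset.sum_congr rfl (fun i _ => by simp)

theorem cubic_subproblem_KKT {m s : ℕ}
    (B : Matrix (Fin m) (Fin s) ℝ) (A : Matrix (Fin s) (Fin s) ℝ)
    (D : Matrix (Fin m) (Fin m) ℝ) (lam mbar H : ℝ)
    (b₁ : Fin s → ℝ) (b₂ : Fin m → ℝ)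
    (hA : A.PosSemidef) (hD : D.PosSemidef) (hDdiag : ∀ i j, i ≠ j → D i j = 0)
    (hlam : 0 < lam) (hm : 0 < mbar) (hH : 0 < H)
    (b : Fin s → ℝ) (hb : b = (mbar * lam) • b₁ + B.transpose.mulVec b₂)
    (Z : ℝ → Matrix (Fin s) (Fin s) ℝ)
    (hZ : ∀ t, Z t = (mbar * lam) • A +
      B.transpose * (D + (H * t / 2) • (1 : Matrix (Fin m) (Fin m) ℝ)) * B)
    (tstar : ℝ) (htnn : 0 ≤ tstar) (hinv : IsUnit (Z tstar))
    (hfix : tstar = euclNorm (B.mulVec ((Z tstar)⁻¹.mulVec b)))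
    (xstar : Fin s → ℝ) (hx : xstar = -((Z tstar)⁻¹.mulVec b))
    (hstar : Fin m → ℝ) (hh : hstar = B.mulVec xstar)
    (μstar : Fin m → ℝ)
    (hμ : μstar = b₂ + D.mulVec hstar + (H / 2 * euclNorm hstar) • hstar) :
    (mbar * lam) • b₁ + (mbar * lam) • A.mulVec xstar + B.transpose.mulVec μstar = 0 ∧
    b₂ + D.mulVec hstar + (H / 2 * euclNorm hstar) • hstar - μstar = 0 ∧
    hstar = B.mulVec xstar := by
  set v : Fin s → ℝ := (Z tstar)⁻¹.mulVec b with hv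
  have hnorm : euclNorm hstar = tstar := by
    rw [hh, hx, Matrix.mulVec_neg, euclNorm_neg, hfix]
  have key : (Z tstar).mulVec v = b := by
    rw [hv, Matrix.mulVec_mulVec,
      Matrix.mul_nonsing_inv _ ((Matrix.isUnit_iff_isUnit_det _).mp hinv),
      Matrix.one_mulVec]
  have key' : (mbar * lam) • (A.mulVec v)
      + B.transpose.mulVec (D.mulVec (B.mulVec v))
      + (H * tstar / 2) • (B.transpose.mulVec (B.mulVec v)) = b := by
    rw [← key, hZ]
    simp only [Matrix.add_mulVec, Matrix.smul_mulVec, Matrix.mul_add,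
      Matrix.add_mul, Matrix.mulVec_mulVec, Matrix.mul_smul,
      Matrix.smul_mul, Matrix.mul_one, Matrix.mul_assoc]
    abel
  refine ⟨?_, by rw [hμ]; abel, hh⟩
  rw [hb] at key'
  rw [hμ, hnorm, hh, hx]
  simp only [Matrix.mulVec_neg, Matrix.mulVec_add, Matrix.mulVec_smul, smul_neg]
  linear_combination (norm := module) -key'
end
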